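/- Let n = 1. Then for every natural number j, W(j+2) = 2p^{j+1} + 1 + 2(p − 1)·(p^{j+1} + r(j+2)). (This identity shows that for n = 1 a hypothetical Adams differential d^r(y_{j+1}) = v^r w_{n+j+2} would have length r = p^{j+1} + r(j+2), which exceeds p^{j+1} and hence cannot occur.) -/

import Mathlib

/-!
For every `n` and `p ≥ 1` the recursion for `W` is solved in closed form by
`W(j) = 2p^j + 1 + 2(p^n - 1) r(j)`: for `j ≤ n` this is `r(j) = p^j`, and passing from `j` to
`j + n + 1` adds `(p^n - 1) p^{j+1} + 1` to `r`, which matches the recursive step of `W` after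
the identity `1 + x(x - 1) - x = (x - 1)^2` with `x = p^n`. For `n = 1` the claim is this closed
form at `j + 2`, with `2p^{j+2} = 2p^{j+1} + 2(p - 1)p^{j+1}`.
-/

/-- `q(k) = ∑_{m<k} p^{m(n+1)}`. -/
def qq (p n k : ℕ) : ℕ := ∑ m ∈ Finset.range k, p ^ (m * (n + 1))

/-- `r(j) = p^{i+1}(p^n-1) q(k) + k + p^i` where `j = i + k(n+1)`, `0 ≤ i ≤ n`. -/
def rr (p n j : ℕ) : ℕ :=
  p ^ (j % (n + 1) + 1) * (p ^ n - 1) * qq p n (j / (n + 1)) + j / (n + 1) + p ^ (j % (n + 1))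

/-- `r'(j) = p^{j+1} - r(j)`. -/
def rr' (p n j : ℕ) : ℕ := p ^ (j + 1) - rr p n j

/-- `W(j) = |w_{n+j}|`: `W(j) = 2p^{n+j}+1` for `0 ≤ j ≤ n`, and
`W(j+n+1) = 2p^j(p-1) + W(j) + 2(p^n-1)(p^{n+j+1}+1)`. -/
def WW (p n : ℕ) (j : ℕ) : ℕ :=
  if h : j < n + 1 then 2 * p ^ (n + j) + 1
  else 2 * p ^ (j - (n + 1)) * (p - 1) + WW p n (j - (n + 1))
       + 2 * (p ^ n - 1) * (p ^ ((j - (n + 1)) + n + 1) + 1)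
termination_by j
decreasing_by omega

theorem WW_of_lt {p n j : ℕ} (h : j < n + 1) : WW p n j = 2 * p ^ (n + j) + 1 := by
  rw [WW, dif_pos h]

theorem WW_add_succ (p n j : ℕ) :
    WW p n (j + (n + 1)) =
      2 * p ^ j * (p - 1) + WW p n j + 2 * (p ^ n - 1) * (p ^ (j + n + 1) + 1) := by
  rw [WW, dif_neg (by omega), Nat.add_sub_cancel]

theorem rr_of_lt {p n j : ℕ} (h : j < n + 1) : rr p n j = p ^ j := by
  simp [rr, qq, Nat.mod_eq_of_lt h, Nat.div_eq_of_lt h]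

theorem rr_add_succ (p n j : ℕ) :
    rr p n (j + (n + 1)) = rr p n j + (p ^ n - 1) * p ^ (j + 1) + 1 := by
  have hpow : p ^ (j % (n + 1) + 1) * p ^ (j / (n + 1) * (n + 1)) = p ^ (j + 1) := by
    rw [← pow_add, add_right_comm, Nat.mod_add_div']
  simp only [rr, qq, Nat.add_mod_right, Nat.add_div_right j n.succ_pos, Finset.sum_range_succ]
  rw [mul_add, mul_right_comm _ _ (p ^ _), hpow]
  ring

theorem WW_eq_rr {p : ℕ} (hp : 0 < p) (n j : ℕ) :
    WW p n j = 2 * p ^ j + 1 + 2 * (p ^ n - 1) * rr p n j := by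
  induction j using Nat.strong_induction_on with
  | h j ih =>
    have hpn : 1 ≤ p ^ n := Nat.one_le_pow _ _ hp
    rcases lt_or_ge j (n + 1) with hj | hj
    · rw [WW_of_lt hj, rr_of_lt hj]
      zify [hpn]
      ring
    · obtain ⟨i, rfl⟩ := Nat.exists_eq_add_of_le' hj
      rw [WW_add_succ, rr_add_succ, ih i (by omega)]
      zify [hp, hpn]
      ring

/-- For `n = 1`: `W(j+2) = 2p^{j+1} + 1 + 2(p-1)(p^{j+1} + r(j+2))`, so a hypothetical
differential `d^r(y_{j+1}) = v^r w_{n+j+2}` would have `r = p^{j+1} + r(j+2) > p^{j+1}`. -/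
theorem n_one_case (p : ℕ) (hp : p.Prime) (j : ℕ) :
    WW p 1 (j + 2) = 2 * p ^ (j + 1) + 1 + 2 * (p - 1) * (p ^ (j + 1) + rr p 1 (j + 2)) := by
  rw [WW_eq_rr hp.pos, pow_one]
  zify [hp.one_le]
  ring
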